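/- arXiv:1008.0919 — 9 statements merged into one kernel-verified Lean document; each statement's English description precedes it below -/
import Mathlib

section
/- Let A be an m×N real matrix and let x be a nonnegative vector with at most k nonzero entries, where k < min over nonzero w in the null space of A of max(k₋(w), k₊(w)), with k₋(w) and k₊(w) the number of negative and positive entries of w respectively. Then x is the unique vector among all nonnegative vectors z with at most k nonzero entries (indeed, the unique sparsest nonnegative vector) satisfying Az = Ax. -/
/-!
If `z ≠ x` were another nonnegative solution with `‖z‖₀ ≤ ‖x‖₀`, then `w = z - x` is a nonzero
vector of the null space of `A`. A negative entry of `w` needs `xᵢ > 0` and a positive entry needs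
`zᵢ > 0`, so both `k₋(w)` and `k₊(w)` are at most `‖x‖₀ ≤ k`, contradicting the hypothesis on `k`.
-/

open Matrix Finset

/-- Number of nonzero entries of a vector. -/
noncomputable def sparsity {N : ℕ} (x : Fin N → ℝ) : ℕ :=
  (univ.filter (fun i => x i ≠ 0)).card

/-- Number of negative entries. -/
noncomputable def negCount {N : ℕ} (w : Fin N → ℝ) : ℕ :=
  (univ.filter (fun i => w i < 0)).card

/-- Number of positive entries. -/
noncomputable def posCount {N : ℕ} (w : Fin N → ℝ) : ℕ :=
  (univ.filter (fun i => 0 < w i)).card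

theorem negCount_sub_le_sparsity {N : ℕ} {z : Fin N → ℝ} (hz : ∀ i, 0 ≤ z i) (x : Fin N → ℝ) :
    negCount (z - x) ≤ sparsity x := by
  refine card_le_card fun i hi => ?_
  simp only [mem_filter, mem_univ, true_and, Pi.sub_apply] at hi ⊢
  intro hxi
  linarith [hz i]

theorem posCount_sub_le_sparsity {N : ℕ} (z : Fin N → ℝ) {x : Fin N → ℝ} (hx : ∀ i, 0 ≤ x i) :
    posCount (z - x) ≤ sparsity z := by
  refine card_le_card fun i hi => ?_
  simp only [mem_filter, mem_univ, true_and, Pi.sub_apply] at hi ⊢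
  intro hzi
  linarith [hx i]

theorem stmt0 {m N k : ℕ} (A : Matrix (Fin m) (Fin N) ℝ) (x : Fin N → ℝ)
    (hx_nonneg : ∀ i, 0 ≤ x i) (hx_sparse : sparsity x ≤ k)
    (hk : ∀ w : Fin N → ℝ, A.mulVec w = 0 → w ≠ 0 →
      k < max (negCount w) (posCount w)) :
    ∀ z : Fin N → ℝ, (∀ i, 0 ≤ z i) → A.mulVec z = A.mulVec x →
      sparsity z ≤ sparsity x → z = x := by
  intro z hz hAz hsz
  by_contra hne
  have hker : A.mulVec (z - x) = 0 := by rw [mulVec_sub, hAz, sub_self]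
  have hneg := negCount_sub_le_sparsity hz x
  have hpos := posCount_sub_le_sparsity z hx_nonneg
  have hlt := hk (z - x) hker (sub_ne_zero.mpr hne)
  omega
end

section
/- Let A be an m×N real matrix. If k ≥ min over nonzero w in the null space of A of max(k₋(w), k₊(w)), then there exists a nonnegative vector x with at most k nonzero entries such that x is not the unique sparsest nonnegative solution of Az = Ax; i.e., there exists a nonnegative z ≠ x with Az = Ax and ‖z‖₀ ≤ ‖x‖₀. -/
open Matrix Finset

/-! Split a null vector `w` as `w = w⁺ - w⁻`. Then `w⁺` and `w⁻` are distinct nonnegative vectors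
with `A w⁺ = A w⁻`, supported on `k₊(w)` and `k₋(w)` entries respectively; taking `x` to be the
one with the larger support gives the required pair. -/

lemma sparsity_posPart {N : ℕ} (w : Fin N → ℝ) : sparsity w⁺ = posCount w := by
  unfold sparsity posCount
  congr 1
  ext i
  simp only [mem_filter, mem_univ, true_and, Pi.posPart_apply]
  rw [← posPart_pos_iff, (posPart_nonneg (w i)).lt_iff_ne, ne_comm]

lemma sparsity_negPart {N : ℕ} (w : Fin N → ℝ) : sparsity w⁻ = negCount w := by
  unfold sparsity negCount
  congr 1
  ext i
  simp only [mem_filter, mem_univ, true_and, Pi.negPart_apply]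
  rw [← negPart_pos_iff, (negPart_nonneg (w i)).lt_iff_ne, ne_comm]

lemma posPart_ne_negPart {ι : Type*} {w : ι → ℝ} (hw : w ≠ 0) : w⁺ ≠ w⁻ := by
  intro h
  apply hw
  rw [← posPart_sub_negPart w, h, sub_self]

lemma mulVec_posPart_eq_mulVec_negPart {m N : ℕ} {A : Matrix (Fin m) (Fin N) ℝ}
    {w : Fin N → ℝ} (hw : A *ᵥ w = 0) : A *ᵥ w⁺ = A *ᵥ w⁻ := by
  rw [← sub_eq_zero, ← mulVec_sub, posPart_sub_negPart, hw]

theorem stmt1 {m N k : ℕ} (A : Matrix (Fin m) (Fin N) ℝ)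
    (hk : ∃ w : Fin N → ℝ, A.mulVec w = 0 ∧ w ≠ 0 ∧
      max (negCount w) (posCount w) ≤ k) :
    ∃ x z : Fin N → ℝ, (∀ i, 0 ≤ x i) ∧ sparsity x ≤ k ∧
      (∀ i, 0 ≤ z i) ∧ z ≠ x ∧ A.mulVec z = A.mulVec x ∧
      sparsity z ≤ sparsity x := by
  obtain ⟨w, hAw, hw, hmax⟩ := hk
  have hpos : ∀ i, 0 ≤ w⁺ i := fun i => posPart_nonneg (w i)
  have hneg : ∀ i, 0 ≤ w⁻ i := fun i => negPart_nonneg (w i)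
  have hA := mulVec_posPart_eq_mulVec_negPart hAw
  have hne := posPart_ne_negPart hw
  rw [max_le_iff] at hmax
  rcases le_total (negCount w) (posCount w) with hle | hle
  · refine ⟨w⁺, w⁻, hpos, ?_, hneg, hne.symm, hA.symm, ?_⟩
    · rw [sparsity_posPart]; exact hmax.2
    · rwa [sparsity_posPart, sparsity_negPart]
  · refine ⟨w⁻, w⁺, hneg, ?_, hpos, hne, hA, ?_⟩
    · rw [sparsity_negPart]; exact hmax.1
    · rwa [sparsity_posPart, sparsity_negPart]
end

section
/- Let A be an m×N real matrix and suppose k < (1/2) · min over nonzero w in the null space of A of ‖w‖₀. Then every vector x with at most k nonzero entries is the unique sparsest solution of Az = Ax: any z with Az = Ax and ‖z‖₀ ≤ ‖x‖₀ satisfies z = x. -/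
open Matrix Finset

lemma sparsity_sub_le {N : ℕ} (z x : Fin N → ℝ) :
    sparsity (z - x) ≤ sparsity z + sparsity x := by
  refine (card_le_card fun i hi => ?_).trans (card_union_le _ _)
  simp only [mem_filter, mem_union, mem_univ, true_and, Pi.sub_apply] at hi ⊢
  by_contra! h
  simp [h.1, h.2] at hi

/-- `z - x` is a null vector with at most `‖z‖₀ + ‖x‖₀` nonzero entries. -/
theorem eq_of_mulVec_eq_of_sparsity_add_lt {m N : ℕ} (A : Matrix (Fin m) (Fin N) ℝ)
    {x z : Fin N → ℝ} (hAz : A *ᵥ z = A *ᵥ x)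
    (hnull : ∀ w : Fin N → ℝ, A *ᵥ w = 0 → w ≠ 0 → sparsity z + sparsity x < sparsity w) :
    z = x := by
  by_contra hne
  have hw : A *ᵥ (z - x) = 0 := by rw [mulVec_sub, hAz, sub_self]
  exact (hnull (z - x) hw (sub_ne_zero.mpr hne)).not_ge (sparsity_sub_le z x)

theorem stmt2 {m N k : ℕ} (A : Matrix (Fin m) (Fin N) ℝ)
    (hk : ∀ w : Fin N → ℝ, A.mulVec w = 0 → w ≠ 0 → 2 * k < sparsity w) :
    ∀ x : Fin N → ℝ, sparsity x ≤ k →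
      ∀ z : Fin N → ℝ, A.mulVec z = A.mulVec x → sparsity z ≤ sparsity x →
        z = x := by
  intro x hx z hAz hz
  exact eq_of_mulVec_eq_of_sparsity_add_lt A hAz fun w hw hw0 => by
    have := hk w hw hw0
    omega
end

section
/- Let A be an m×N real matrix with nontrivial null space. If k ≥ (1/2) · min over nonzero w in the null space of A of ‖w‖₀, then there exists a vector x with at most k nonzero entries that is not the unique sparsest solution of Az = Ax; i.e., there exists z ≠ x with Az = Ax and ‖z‖₀ ≤ ‖x‖₀. -/
open Matrix Finset

theorem stmt3 {m N k : ℕ} (A : Matrix (Fin m) (Fin N) ℝ)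
    (hk : ∃ w : Fin N → ℝ, A.mulVec w = 0 ∧ w ≠ 0 ∧ sparsity w ≤ 2 * k) :
    ∃ x z : Fin N → ℝ, sparsity x ≤ k ∧ z ≠ x ∧
      A.mulVec z = A.mulVec x ∧ sparsity z ≤ sparsity x := by
  obtain ⟨w, hAw, hw0, hwk⟩ := hk
  set S : Finset (Fin N) := univ.filter (fun i => w i ≠ 0) with hS
  set n : ℕ := S.card with hn
  have hwn : n ≤ 2 * k := by simpa [sparsity, hS, hn] using hwk
  have hn1 : 1 ≤ n := by
    rw [hn, Nat.one_le_iff_ne_zero, ne_eq, Finset.card_eq_zero]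
    intro h
    apply hw0
    funext i
    show w i = 0
    by_contra hi
    have : i ∈ S := by simp [hS, hi]
    simp [h] at this
  have hhalf : (n + 1) / 2 ≤ n := Nat.div_le_of_le_mul (by omega)
  obtain ⟨S1, hS1sub, hS1card⟩ := Finset.exists_subset_card_eq hhalf
  set x : Fin N → ℝ := fun i => if i ∈ S1 then w i else 0 with hx
  set z : Fin N → ℝ := fun i => x i - w i with hz
  refine ⟨x, z, ?_, ?_, ?_, ?_⟩
  · -- sparsity x ≤ k
    have : (univ.filter (fun i => x i ≠ 0)) ⊆ S1 := by
      intro i hi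
      simp only [mem_filter, hx] at hi
      by_contra h
      simp [h] at hi
    calc sparsity x ≤ S1.card := Finset.card_le_card this
      _ = (n + 1) / 2 := hS1card
      _ ≤ k := by omega
  · -- z ≠ x
    intro h
    apply hw0
    funext i
    show w i = 0
    have h2 := congrFun h i
    have h3 : x i - w i = x i := h2
    linarith
  · -- A z = A x
    have : z = x - w := by funext i; simp [hz]
    rw [this, Matrix.mulVec_sub, hAw, sub_zero]
  · -- sparsity z ≤ sparsity x
    have hzsupp : (univ.filter (fun i => z i ≠ 0)) ⊆ S \ S1 := by
      intro i hi
      simp only [mem_filter, hz, hx] at hi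
      by_cases h1 : i ∈ S1
      · simp [h1] at hi
      · simp only [if_neg h1, zero_sub, ne_eq, neg_eq_zero] at hi
        simp [Finset.mem_sdiff, hS, hi.2, h1]
    have hxsupp : S1 ⊆ (univ.filter (fun i => x i ≠ 0)) := by
      intro i hi
      have hiS : i ∈ S := hS1sub hi
      simp only [hS, mem_filter] at hiS
      simp [hx, hi, hiS.2]
    calc sparsity z ≤ (S \ S1).card := Finset.card_le_card hzsupp
      _ = n - (n + 1) / 2 := by rw [Finset.card_sdiff_of_subset hS1sub, hS1card]
      _ ≤ (n + 1) / 2 := by omega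
      _ = S1.card := hS1card.symm
      _ ≤ sparsity x := Finset.card_le_card hxsupp
end

section
/- Let A be an m×N real matrix and let h be a positive integer. Suppose that for every nonempty set H ⊆ {1,…,N} of columns with |H| ≤ h, the submatrix A_H (the columns of A indexed by H) has at least one row containing exactly one nonzero element. Then every nonzero vector in the null space of A has at least h+1 nonzero entries. -/
open Matrix Finset

theorem stmt4 {m N h : ℕ} (A : Matrix (Fin m) (Fin N) ℝ) (hh : 0 < h)
    (hrow : ∀ H : Finset (Fin N), H.Nonempty → H.card ≤ h →
      ∃ i : Fin m, (H.filter (fun j => A i j ≠ 0)).card = 1) :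
    ∀ w : Fin N → ℝ, A.mulVec w = 0 → w ≠ 0 → h + 1 ≤ sparsity w := by
  intro w hw hw0
  by_contra hle
  push_neg at hle
  set H : Finset (Fin N) := univ.filter (fun i => w i ≠ 0) with hH
  have hHne : H.Nonempty := by
    rcases Function.ne_iff.mp hw0 with ⟨j, hj⟩
    exact ⟨j, by simp only [hH, Finset.mem_filter, Finset.mem_univ, true_and]; simpa using hj⟩
  have hHcard : H.card ≤ h := by
    have : H.card < h + 1 := hle
    omega
  obtain ⟨i, hi⟩ := hrow H hHne hHcard
  obtain ⟨j, hj⟩ := Finset.card_eq_one.mp hi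
  have hjmem : j ∈ H ∧ A i j ≠ 0 := by
    have : j ∈ H.filter (fun j => A i j ≠ 0) := hj ▸ Finset.mem_singleton_self j
    simpa using this
  have hwj : w j ≠ 0 := by simpa [hH] using hjmem.1
  have hsum : (A.mulVec w) i = A i j * w j := by
    rw [Matrix.mulVec, dotProduct]
    rw [← Finset.sum_subset (Finset.subset_univ H) (by
      intro k _ hk
      have : w k = 0 := by
        by_contra hne
        exact hk (by simp [hH, hne])
      simp [this])]
    rw [Finset.sum_eq_single_of_mem j hjmem.1]
    intro k hk hkj
    by_cases hA : A i k = 0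
    · simp [hA]
    · exfalso
      have : k ∈ H.filter (fun j => A i j ≠ 0) := Finset.mem_filter.mpr ⟨hk, hA⟩
      rw [hj] at this
      exact hkj (Finset.mem_singleton.mp this)
  rw [hw] at hsum
  exact mul_ne_zero hjmem.2 hwj hsum.symm
end

section
/- Let A be an m×N real matrix and h a positive integer. Suppose for every nonempty H ⊆ {1,…,N} with |H| ≤ h, the submatrix A_H has some row with exactly one nonzero element. Then for any k < (h+1)/2, every vector x with at most k nonzero entries is the unique sparsest solution to Az = Ax: any z with Az = Ax and ‖z‖₀ ≤ ‖x‖₀ equals x. -/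
/-!
If `z ≠ x` then `v = z - x` is a nonzero kernel vector of `A` with at most
`‖z‖₀ + ‖x‖₀ ≤ 2k ≤ h` nonzero entries. A row of `A` that has exactly one nonzero entry on the
support of `v` then sees exactly one nonzero term of `(A v)_i`, so `A v ≠ 0`, a contradiction.
-/

open Matrix Finset

lemma Matrix.mulVec_apply_ne_zero_of_card_filter_eq_one {m n R : Type*} [Fintype n]
    [Semiring R] [NoZeroDivisors R] [DecidableEq R] (A : Matrix m n R) (v : n → R) (i : m)
    (hi : ((univ.filter (fun j => v j ≠ 0)).filter (fun j => A i j ≠ 0)).card = 1) :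
    (A *ᵥ v) i ≠ 0 := by
  obtain ⟨j, hj⟩ := card_eq_one.mp hi
  have hj_mem : j ∈ (univ.filter (fun j => v j ≠ 0)).filter (fun j => A i j ≠ 0) := by
    simp [hj]
  simp only [mem_filter, mem_univ, true_and] at hj_mem
  have hsum : (A *ᵥ v) i = A i j * v j := by
    refine sum_eq_single j (fun b _ hb => ?_) (by simp)
    by_contra hAv
    have hb_mem : b ∈ (univ.filter (fun j => v j ≠ 0)).filter (fun j => A i j ≠ 0) := by
      simp only [mem_filter, mem_univ, true_and]
      exact ⟨right_ne_zero_of_mul hAv, left_ne_zero_of_mul hAv⟩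
    exact hb (mem_singleton.mp (hj ▸ hb_mem))
  rw [hsum]
  exact mul_ne_zero hj_mem.2 hj_mem.1

theorem stmt5_general {m N h k : ℕ} (A : Matrix (Fin m) (Fin N) ℝ)
    (hrow : ∀ H : Finset (Fin N), H.Nonempty → H.card ≤ h →
      ∃ i : Fin m, (H.filter (fun j => A i j ≠ 0)).card = 1)
    (hk : 2 * k < h + 1) :
    ∀ x : Fin N → ℝ, sparsity x ≤ k →
      ∀ z : Fin N → ℝ, A.mulVec z = A.mulVec x → sparsity z ≤ sparsity x →
        z = x := by
  intro x hx z hz hsz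
  by_contra hne
  obtain ⟨j, hj⟩ := Function.ne_iff.mp (sub_ne_zero.mpr hne)
  have hsupp : (univ.filter (fun j => (z - x) j ≠ 0)).Nonempty := ⟨j, by simpa using hj⟩
  have hcard : sparsity (z - x) ≤ h := by
    have := sparsity_sub_le z x
    omega
  obtain ⟨i, hi⟩ := hrow _ hsupp hcard
  apply A.mulVec_apply_ne_zero_of_card_filter_eq_one (z - x) i hi
  rw [mulVec_sub, hz, sub_self, Pi.zero_apply]

theorem stmt5 {m N h k : ℕ} (A : Matrix (Fin m) (Fin N) ℝ) (hh : 0 < h)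
    (hrow : ∀ H : Finset (Fin N), H.Nonempty → H.card ≤ h →
      ∃ i : Fin m, (H.filter (fun j => A i j ≠ 0)).card = 1)
    (hk : 2 * k < h + 1) :
    ∀ x : Fin N → ℝ, sparsity x ≤ k →
      ∀ z : Fin N → ℝ, A.mulVec z = A.mulVec x → sparsity z ≤ sparsity x →
        z = x :=
  stmt5_general A hrow hk
end

section
/- Let A be an m×N real matrix and k' a positive integer. Suppose that for every nonzero w in the null space of A and every index set K' with |K'| ≤ k', we have ‖w_{K'}‖₁ ≤ α‖w‖₁ for some fixed α < 1/2. Then ℓ₁ minimization recovers every k'-sparse vector: for every x with ‖x‖₀ ≤ k', x is the unique minimizer of ‖z‖₁ subject to Az = Ax. -/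
open Matrix Finset

/-- Null space property implies exact recovery of every `k'`-sparse vector by
`ℓ₁` minimization. -/
theorem stmt14 {m N k' : ℕ} (hk' : 0 < k') (A : Matrix (Fin m) (Fin N) ℝ)
    (α : ℝ) (hα : α < 1 / 2)
    (hNSP : ∀ w : Fin N → ℝ, A.mulVec w = 0 → w ≠ 0 →
      ∀ K' : Finset (Fin N), K'.card ≤ k' →
        ∑ i ∈ K', |w i| ≤ α * ∑ i, |w i|) :
    ∀ x : Fin N → ℝ, sparsity x ≤ k' →
      ∀ z : Fin N → ℝ, A.mulVec z = A.mulVec x → z ≠ x →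
        ∑ i, |x i| < ∑ i, |z i| := by
  intro x hx z hAz hzx
  set w : Fin N → ℝ := x - z with hw
  have hAw : A.mulVec w = 0 := by
    rw [hw, Matrix.mulVec_sub, hAz, sub_self]
  have hw0 : w ≠ 0 := by
    intro h
    apply hzx
    have := sub_eq_zero.mp h
    exact this.symm
  set K : Finset (Fin N) := univ.filter (fun i => x i ≠ 0) with hK
  have hNS := hNSP w hAw hw0 K hx
  -- ∑ |w| > 0 since w ≠ 0
  have hwpos : 0 < ∑ i, |w i| := by
    rcases Function.ne_iff.mp hw0 with ⟨j, hj⟩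
    have : 0 < |w j| := abs_pos.mpr hj
    refine lt_of_lt_of_le this ?_
    exact Finset.single_le_sum (f := fun i => |w i|) (fun i _ => abs_nonneg _) (mem_univ j)
  have hhalf : ∑ i ∈ K, |w i| < (1/2) * ∑ i, |w i| :=
    lt_of_le_of_lt hNS (by nlinarith)
  -- split sums over K and Kᶜ
  have hsplit : ∀ v : Fin N → ℝ,
      ∑ i, |v i| = ∑ i ∈ K, |v i| + ∑ i ∈ Kᶜ, |v i| := by
    intro v
    rw [Finset.sum_add_sum_compl]
  -- x vanishes off K
  have hxK : ∀ i ∈ Kᶜ, x i = 0 := by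
    intro i hi
    simp [hK, Finset.mem_compl, Finset.mem_filter] at hi
    exact hi
  have hxsum : ∑ i, |x i| = ∑ i ∈ K, |x i| := by
    rw [hsplit x]
    have : ∑ i ∈ Kᶜ, |x i| = 0 :=
      Finset.sum_eq_zero (fun i hi => by rw [hxK i hi, abs_zero])
    linarith
  -- off K, |z i| = |w i|
  have hzc : ∑ i ∈ Kᶜ, |z i| = ∑ i ∈ Kᶜ, |w i| := by
    refine Finset.sum_congr rfl (fun i hi => ?_)
    rw [hw]
    simp [hxK i hi, abs_sub_comm]
  -- triangle on K: |x i| ≤ |w i| + |z i|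
  have htri : ∑ i ∈ K, |x i| ≤ ∑ i ∈ K, |w i| + ∑ i ∈ K, |z i| := by
    rw [← Finset.sum_add_distrib]
    refine Finset.sum_le_sum (fun i _ => ?_)
    have : x i = w i + z i := by rw [hw]; ring_nf; simp
    rw [this]
    exact abs_add_le _ _
  have hw2 : ∑ i ∈ K, |w i| < ∑ i ∈ Kᶜ, |w i| := by
    have := hsplit w
    linarith
  have hz2 := hsplit z
  linarith
end

section
/- Conversely, let A be an m×N real matrix such that every x with at most k' nonzero entries is the unique minimizer of ‖z‖₁ subject to Az = Ax. Then for every nonzero w in the null space of A and every index set K' with |K'| ≤ k', it holds that ‖w_{K'}‖₁ < (1/2)‖w‖₁. -/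
open Matrix Finset

theorem sparsity_le_card_of_support_subset {N : ℕ} {x : Fin N → ℝ} {K : Finset (Fin N)}
    (hx : ∀ i, x i ≠ 0 → i ∈ K) : sparsity x ≤ #K :=
  card_le_card fun i hi => hx i (mem_filter.1 hi).2

theorem sum_abs_indicator {ι : Type*} [Fintype ι] (K : Finset ι) (w : ι → ℝ) :
    ∑ i, |(K : Set ι).indicator w i| = ∑ i ∈ K, |w i| := by
  rw [← sum_indicator_subset (fun i => |w i|) (subset_univ K)]
  exact sum_congr rfl fun i _ => (congr_fun (Set.indicator_comp_of_zero abs_zero) i).symm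

theorem sum_abs_lt_sum_abs_compl_of_unique_l1_minimizer {m N k' : ℕ}
    {A : Matrix (Fin m) (Fin N) ℝ}
    (hrec : ∀ x : Fin N → ℝ, sparsity x ≤ k' →
      ∀ z : Fin N → ℝ, A *ᵥ z = A *ᵥ x → z ≠ x → ∑ i, |x i| < ∑ i, |z i|)
    {w : Fin N → ℝ} (hw : A *ᵥ w = 0) (hw0 : w ≠ 0) {K : Finset (Fin N)} (hK : #K ≤ k') :
    ∑ i ∈ K, |w i| < ∑ i ∈ Kᶜ, |w i| := by
  set x := (K : Set (Fin N)).indicator w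
  have hsparse : sparsity x ≤ k' :=
    (sparsity_le_card_of_support_subset fun i hi => (Set.indicator_apply_ne_zero.1 hi).1).trans hK
  have hA : A *ᵥ (x - w) = A *ᵥ x := by rw [mulVec_sub, hw, sub_zero]
  -- `x - w = -w_{Kᶜ}` is a competitor with the same measurements as `x = w_K`.
  have hcompl : x - w = -((Kᶜ : Finset (Fin N)) : Set (Fin N)).indicator w := by
    rw [coe_compl, Set.indicator_compl, neg_sub]
  have hx_norm : ∑ i, |x i| = ∑ i ∈ K, |w i| := sum_abs_indicator K w
  have hcompl_norm : ∑ i, |(x - w) i| = ∑ i ∈ Kᶜ, |w i| := by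
    simp only [hcompl, Pi.neg_apply, abs_neg, sum_abs_indicator]
  rw [← hx_norm, ← hcompl_norm]
  exact hrec x hsparse (x - w) hA (mt sub_eq_self.1 hw0)

/-- Necessity of the null space property for `ℓ₁` recovery: if every `k'`-sparse
vector is the unique `ℓ₁` minimizer, then `‖w_{K'}‖₁ < ‖w‖₁ / 2` for every
nonzero null vector `w` and every `K'` with `|K'| ≤ k'`. -/
theorem stmt15 {m N k' : ℕ} (A : Matrix (Fin m) (Fin N) ℝ)
    (hrec : ∀ x : Fin N → ℝ, sparsity x ≤ k' →
      ∀ z : Fin N → ℝ, A.mulVec z = A.mulVec x → z ≠ x →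
        ∑ i, |x i| < ∑ i, |z i|) :
    ∀ w : Fin N → ℝ, A.mulVec w = 0 → w ≠ 0 →
      ∀ K' : Finset (Fin N), K'.card ≤ k' →
        ∑ i ∈ K', |w i| < (1 / 2) * ∑ i, |w i| := by
  intro w hw hw0 K' hK'
  have hsplit := sum_add_sum_compl K' fun i => |w i|
  have hlt := sum_abs_lt_sum_abs_compl_of_unique_l1_minimizer hrec hw hw0 hK'
  linarith
end

section
/- Let A be an m×N nonnegative real matrix whose bipartite adjacency structure (column j adjacent to row i iff A_{ij} ≠ 0) is a (k, ε)-expander, with all nonzero entries of A in [1, 2], minimum column degree d_min and maximum column degree d_max. Then for any index set K' with |K'| ≤ k and any vector w supported arbitrarily, ordering coordinates of K' decreasingly by |w|, one has ‖A_{K'} w_{K'}‖₁ ≥ (d_min − 4·d_max·ε)·‖w_{K'}‖₁. -/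
/-!
Order the columns of `K'` by decreasing `|w j|`. A row meeting `K'` has a first column `j₀` in
this order, and every later column meeting that row is a collision there. As `1 ≤ A i j ≤ 2`, the
row contributes at least `|w j₀| - 2 ∑_{collisions} |w j|` to `‖A w‖₁`, so
`‖A w‖₁ ≥ ∑ deg j * |w j| - 3 ∑ coll j * |w j|`. The rows reached by a prefix `P` of the order
are exactly `N(P)`, so `P` has `E(P) - |N(P)| ≤ ε E(P) ≤ ε d_max |P|` collisions; as `|w|`
decreases along the order, Abel summation turns these prefix bounds into
`∑ coll j * |w j| ≤ ε d_max ‖w‖₁`, which gives even the constant `d_min - 3 d_max ε`.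
-/

open Matrix Finset

/-- Number of nonzero entries in column `j` of `A` (the degree of the
corresponding left-hand "edge" node in the bipartite graph of `A`). -/
noncomputable def colDeg {m N : ℕ} (A : Matrix (Fin m) (Fin N) ℝ)
    (j : Fin N) : ℕ :=
  (univ.filter (fun i => A i j ≠ 0)).card

open Classical in
/-- Rows having a nonzero entry in some column of `S`: the neighbors `N(S)`. -/
noncomputable def nbrs {m N : ℕ} (A : Matrix (Fin m) (Fin N) ℝ)
    (S : Finset (Fin N)) : Finset (Fin m) :=
  univ.filter (fun i => ∃ j ∈ S, A i j ≠ 0)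

theorem Finset.sum_mul_le_mul_sum_of_prefix_sum_le {ι : Type*} [LinearOrder ι]
    (S : Finset ι) (c g : ι → ℝ) (B : ℝ) (hg : ∀ j ∈ S, 0 ≤ g j) (hanti : AntitoneOn g S)
    (hc : ∀ t ∈ S, ∑ j ∈ S with j ≤ t, c j ≤ B * #{j ∈ S | j ≤ t}) :
    ∑ j ∈ S, c j * g j ≤ B * ∑ j ∈ S, g j := by
  induction S using Finset.induction_on_max generalizing g with
  | empty => simp
  | insert a S hlt ih =>
    have haS : a ∉ S := fun h => (hlt a h).false
    have hpre : ∀ t ∈ S, {j ∈ insert a S | j ≤ t} = {j ∈ S | j ≤ t} := fun t ht => by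
      rw [filter_insert, if_neg (hlt t ht).not_ge]
    have hall : {j ∈ insert a S | j ≤ a} = insert a S :=
      filter_true_of_mem fun j hj => (mem_insert.1 hj).elim le_of_eq fun h => (hlt j h).le
    -- Abel summation: peel off the smallest value `g a` from every term.
    have hS : ∑ j ∈ S, c j * (g j - g a) ≤ B * ∑ j ∈ S, (g j - g a) := by
      refine ih (fun j => g j - g a) (fun j hj => ?_) (fun j hj l hl hjl => ?_) (fun t ht => ?_)
      · exact sub_nonneg.2 (hanti (mem_insert_of_mem hj) (mem_insert_self a S) (hlt j hj).le)
      · exact sub_le_sub_right (hanti (mem_insert_of_mem hj) (mem_insert_of_mem hl) hjl) _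
      · rw [← hpre t ht]; exact hc t (mem_insert_of_mem ht)
    have hfull : ∑ j ∈ insert a S, c j ≤ B * #(insert a S) := by
      simpa only [hall] using hc a (mem_insert_self a S)
    have hga := mul_le_mul_of_nonneg_left hfull (hg a (mem_insert_self a S))
    simp only [mul_sub, sum_sub_distrib, ← sum_mul, sum_const, nsmul_eq_mul] at hS
    rw [sum_insert haS, card_insert_of_notMem haS] at hga
    rw [sum_insert haS, sum_insert haS]
    push_cast at hga
    linarith

theorem abs_sub_two_mul_sum_abs_le_abs_sum {ι : Type*} [DecidableEq ι] {T : Finset ι} {j₀ : ι}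
    (hj₀ : j₀ ∈ T) (a w : ι → ℝ) (ha : ∀ j ∈ T, 1 ≤ a j ∧ a j ≤ 2) :
    |w j₀| - 2 * ∑ j ∈ T.erase j₀, |w j| ≤ |∑ j ∈ T, a j * w j| := by
  have habs : ∀ j ∈ T, |a j| = a j := fun j hj => abs_of_pos (by linarith [ha j hj])
  have hfirst : |w j₀| ≤ |a j₀ * w j₀| := by
    rw [abs_mul, habs j₀ hj₀]
    exact le_mul_of_one_le_left (abs_nonneg _) (ha j₀ hj₀).1
  have hrest : |∑ j ∈ T.erase j₀, a j * w j| ≤ 2 * ∑ j ∈ T.erase j₀, |w j| := by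
    refine (abs_sum_le_sum_abs _ _).trans ?_
    rw [mul_sum]
    gcongr with j hj
    rw [abs_mul, habs j (mem_of_mem_erase hj)]
    exact mul_le_mul_of_nonneg_right (ha j (mem_of_mem_erase hj)).2 (abs_nonneg _)
  rw [← add_sum_erase T _ hj₀]
  linarith [abs_sub_abs_le_abs_add (a j₀ * w j₀) (∑ j ∈ T.erase j₀, a j * w j)]

section Collisions

variable {m N : ℕ} (A : Matrix (Fin m) (Fin N) ℝ)

noncomputable def collRows (S : Finset (Fin N)) (j : Fin N) : Finset (Fin m) :=
  univ.filter (fun i => A i j ≠ 0) ∩ nbrs A (S.filter (· < j))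

theorem mem_nbrs {S : Finset (Fin N)} {i : Fin m} : i ∈ nbrs A S ↔ ∃ j ∈ S, A i j ≠ 0 := by
  simp [nbrs]

theorem nbrs_empty : nbrs A ∅ = ∅ := by
  ext i; simp [mem_nbrs]

theorem nbrs_insert (a : Fin N) (S : Finset (Fin N)) :
    nbrs A (insert a S) = univ.filter (fun i => A i a ≠ 0) ∪ nbrs A S := by
  ext i; simp [mem_nbrs]

theorem nbrs_submatrix {N' : ℕ} (e : Fin N' ↪ Fin N) (S : Finset (Fin N')) :
    nbrs (A.submatrix id e) S = nbrs A (S.map e) := by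
  ext i; simp [mem_nbrs]

theorem collRows_filter_le (S : Finset (Fin N)) {j t : Fin N} (hjt : j ≤ t) :
    collRows A (S.filter (· ≤ t)) j = collRows A S j := by
  rw [collRows, collRows, filter_filter]
  congr 2
  exact filter_congr fun x _ => ⟨And.right, fun h : x < j => ⟨h.le.trans hjt, h⟩⟩

theorem card_nbrs_add_sum_card_collRows (S : Finset (Fin N)) :
    #(nbrs A S) + ∑ j ∈ S, #(collRows A S j) = ∑ j ∈ S, colDeg A j := by
  induction S using Finset.induction_on_max with
  | empty => simp [nbrs_empty]
  | insert a S hlt ih =>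
    have haS : a ∉ S := fun h => (hlt a h).false
    have hcollS : ∀ j ∈ S, collRows A (insert a S) j = collRows A S j := fun j hj => by
      rw [collRows, collRows, filter_insert, if_neg (hlt j hj).not_gt]
    have hcolla : collRows A (insert a S) a = univ.filter (fun i => A i a ≠ 0) ∩ nbrs A S := by
      rw [collRows, filter_insert, if_neg (lt_irrefl a), filter_true_of_mem hlt]
    rw [sum_insert haS, sum_insert haS, sum_congr rfl fun j hj => congrArg card (hcollS j hj),
      hcolla, nbrs_insert]
    have := card_union_add_card_inter (univ.filter (fun i => A i a ≠ 0)) (nbrs A S)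
    rw [colDeg]
    omega

theorem sum_card_collRows_le_of_expansion {S : Finset (Fin N)} {ε : ℝ}
    (hS : (1 - ε) * ∑ j ∈ S, (colDeg A j : ℝ) ≤ #(nbrs A S)) :
    ∑ j ∈ S, (#(collRows A S j) : ℝ) ≤ ε * ∑ j ∈ S, (colDeg A j : ℝ) := by
  have hcount : (#(nbrs A S) : ℝ) + ∑ j ∈ S, (#(collRows A S j) : ℝ)
      = ∑ j ∈ S, (colDeg A j : ℝ) := by
    exact_mod_cast card_nbrs_add_sum_card_collRows A S
  linarith

theorem sum_card_collRows_mul_le {S : Finset (Fin N)} {ε : ℝ} (hε : 0 ≤ ε) {dmax : ℕ}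
    (hdmax : ∀ j ∈ S, colDeg A j ≤ dmax)
    (hexp : ∀ T ⊆ S, (1 - ε) * ∑ j ∈ T, (colDeg A j : ℝ) ≤ #(nbrs A T))
    (g : Fin N → ℝ) (hg : ∀ j ∈ S, 0 ≤ g j) (hanti : AntitoneOn g S) :
    ∑ j ∈ S, #(collRows A S j) * g j ≤ ε * dmax * ∑ j ∈ S, g j := by
  refine S.sum_mul_le_mul_sum_of_prefix_sum_le _ g _ hg hanti fun t _ => ?_
  set P := S.filter (· ≤ t)
  have hP : ∑ j ∈ P, (#(collRows A S j) : ℝ) = ∑ j ∈ P, (#(collRows A P j) : ℝ) :=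
    sum_congr rfl fun j hj => by rw [collRows_filter_le A S (mem_filter.1 hj).2]
  calc ∑ j ∈ P, (#(collRows A S j) : ℝ)
      ≤ ε * ∑ j ∈ P, (colDeg A j : ℝ) :=
        hP ▸ sum_card_collRows_le_of_expansion A (hexp P (filter_subset _ S))
    _ ≤ ε * ∑ j ∈ P, (dmax : ℝ) := by
        gcongr with j hj; exact_mod_cast hdmax j (mem_of_mem_filter j hj)
    _ = ε * dmax * #P := by rw [sum_const, nsmul_eq_mul]; ring

theorem sum_abs_sub_three_mul_sum_collRows_le_abs_sum
    (hentries : ∀ i j, A i j ≠ 0 → 1 ≤ A i j ∧ A i j ≤ 2) (S : Finset (Fin N))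
    (w : Fin N → ℝ) (i : Fin m) :
    ∑ j ∈ S, (if A i j ≠ 0 then |w j| else 0)
        - 3 * ∑ j ∈ S, (if i ∈ collRows A S j then |w j| else 0)
      ≤ |∑ j ∈ S, A i j * w j| := by
  set T := S.filter (fun j => A i j ≠ 0)
  rcases T.eq_empty_or_nonempty with hT | hT
  · have hzero : ∀ j ∈ S, A i j = 0 := fun j hj => by
      by_contra h; exact (filter_eq_empty_iff.1 hT hj) h
    simp +contextual [hzero, collRows]
  -- the row's first column in `S` is the one entry of the row that is not a collision
  set j₀ := T.min' hT
  have hcoll : S.filter (fun j => i ∈ collRows A S j) = T.erase j₀ := by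
    ext j
    simp only [collRows, mem_filter, mem_inter, mem_univ, true_and, mem_nbrs, mem_erase, T]
    constructor
    · rintro ⟨hjS, hij, j', ⟨hj'S, hj'j⟩, hij'⟩
      exact ⟨(T.min'_le j' (mem_filter.2 ⟨hj'S, hij'⟩)).trans_lt hj'j |>.ne', hjS, hij⟩
    · rintro ⟨hne, hjS, hij⟩
      have hj₀ := mem_filter.1 (T.min'_mem hT)
      exact ⟨hjS, hij, j₀, ⟨hj₀.1, lt_of_le_of_ne (T.min'_le j (mem_filter.2 ⟨hjS, hij⟩))
        (Ne.symm hne)⟩, hj₀.2⟩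
  have hrow : ∑ j ∈ S, A i j * w j = ∑ j ∈ T, A i j * w j :=
    (sum_filter_of_ne fun _ _ => left_ne_zero_of_mul).symm
  rw [← sum_filter, ← sum_filter, hcoll, hrow, ← add_sum_erase T _ (T.min'_mem hT)]
  have := abs_sub_two_mul_sum_abs_le_abs_sum (T.min'_mem hT) (A i) w
    fun j hj => hentries i j (mem_filter.1 hj).2
  linarith

theorem sum_colDeg_mul_abs_sub_le_sum_abs
    (hentries : ∀ i j, A i j ≠ 0 → 1 ≤ A i j ∧ A i j ≤ 2) (S : Finset (Fin N))
    (w : Fin N → ℝ) :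
    ∑ j ∈ S, (colDeg A j : ℝ) * |w j| - 3 * ∑ j ∈ S, (#(collRows A S j) : ℝ) * |w j|
      ≤ ∑ i, |∑ j ∈ S, A i j * w j| := by
  have hdeg : ∀ j, (colDeg A j : ℝ) * |w j| = ∑ i, if A i j ≠ 0 then |w j| else 0 := fun j => by
    rw [← sum_filter, sum_const, colDeg, nsmul_eq_mul]
  have hcoll : ∀ j, (#(collRows A S j) : ℝ) * |w j|
      = ∑ i, if i ∈ collRows A S j then |w j| else 0 := fun j => by
    rw [sum_ite_mem, univ_inter, sum_const, nsmul_eq_mul]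
  simp only [hdeg, hcoll]
  rw [sum_comm, sum_comm (s := S), mul_sum, ← sum_sub_distrib]
  exact sum_le_sum fun i _ => sum_abs_sub_three_mul_sum_collRows_le_abs_sum A hentries S w i

end Collisions

theorem dmin_sub_three_mul_le_of_antitoneOn {m N k : ℕ} (A : Matrix (Fin m) (Fin N) ℝ)
    (hentries : ∀ i j, A i j ≠ 0 → 1 ≤ A i j ∧ A i j ≤ 2)
    (dmin dmax : ℕ) (hd : ∀ j, dmin ≤ colDeg A j ∧ colDeg A j ≤ dmax)
    (ε : ℝ) (hε : 0 ≤ ε)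
    (hexp : ∀ S : Finset (Fin N), S.card ≤ k →
      (1 - ε) * ∑ j ∈ S, (colDeg A j : ℝ) ≤ (nbrs A S).card)
    (K' : Finset (Fin N)) (hK' : K'.card ≤ k) (w : Fin N → ℝ)
    (hw : AntitoneOn (fun j => |w j|) K') :
    ((dmin : ℝ) - 3 * dmax * ε) * ∑ j ∈ K', |w j| ≤ ∑ i, |∑ j ∈ K', A i j * w j| := by
  have hcoll := sum_card_collRows_mul_le A hε (fun j _ => (hd j).2)
    (fun T hT => hexp T ((card_le_card hT).trans hK')) _ (fun j _ => abs_nonneg (w j)) hw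
  have hdeg : (dmin : ℝ) * ∑ j ∈ K', |w j| ≤ ∑ j ∈ K', (colDeg A j : ℝ) * |w j| := by
    rw [mul_sum]
    gcongr with j
    exact_mod_cast (hd j).1
  have := sum_colDeg_mul_abs_sub_le_sum_abs A hentries K' w
  linarith

theorem stmt16_general {m N k : ℕ} (A : Matrix (Fin m) (Fin N) ℝ)
    (hentries : ∀ i j, A i j ≠ 0 → 1 ≤ A i j ∧ A i j ≤ 2)
    (dmin dmax : ℕ) (hd : ∀ j, dmin ≤ colDeg A j ∧ colDeg A j ≤ dmax)
    (ε : ℝ) (hε0 : 0 < ε)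
    (hexp : ∀ S : Finset (Fin N), S.card ≤ k →
      (1 - ε) * ∑ j ∈ S, (colDeg A j : ℝ) ≤ (nbrs A S).card)
    (K' : Finset (Fin N)) (hK' : K'.card ≤ k) (w : Fin N → ℝ) :
    ((dmin : ℝ) - 4 * dmax * ε) * ∑ j ∈ K', |w j| ≤
      ∑ i, |∑ j ∈ K', A i j * w j| := by
  obtain ⟨σ, hσ⟩ : ∃ σ : Equiv.Perm (Fin N), Antitone fun j => |w (σ j)| :=
    ⟨Tuple.sort fun j => -|w j|,
      fun _ _ hab => neg_le_neg_iff.1 (Tuple.monotone_sort (fun j => -|w j|) hab)⟩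
  have hsorted := dmin_sub_three_mul_le_of_antitoneOn (A.submatrix id σ)
    (fun i j => hentries i (σ j)) dmin dmax (fun j => hd (σ j)) ε hε0.le
    (fun S hS => by
      have := hexp (S.map σ.toEmbedding) (by rwa [card_map])
      rwa [← nbrs_submatrix, sum_map] at this)
    (K'.map σ.symm.toEmbedding) (by simpa using hK') (w ∘ σ) (hσ.antitoneOn _)
  simp only [sum_map, Equiv.coe_toEmbedding, Function.comp_apply, submatrix_apply, id_eq,
    Equiv.apply_symm_apply] at hsorted
  have : 0 ≤ (dmax : ℝ) * ε * ∑ j ∈ K', |w j| := by positivity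
  linarith

/-- RIP-1-type lower bound from expansion: if the bipartite structure of the
nonnegative matrix `A` (nonzero entries in `[1,2]`, column degrees between
`d_min` and `d_max`) is a `(k, ε)`-expander, then
`‖A_{K'} w_{K'}‖₁ ≥ (d_min − 4 d_max ε) ‖w_{K'}‖₁` for any `K'` with
`|K'| ≤ k`. -/
theorem stmt16 {m N k : ℕ} (A : Matrix (Fin m) (Fin N) ℝ)
    (hnonneg : ∀ i j, 0 ≤ A i j)
    (hentries : ∀ i j, A i j ≠ 0 → 1 ≤ A i j ∧ A i j ≤ 2)
    (dmin dmax : ℕ) (hd : ∀ j, dmin ≤ colDeg A j ∧ colDeg A j ≤ dmax)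
    (ε : ℝ) (hε0 : 0 < ε) (hε1 : ε < 1)
    (hexp : ∀ S : Finset (Fin N), S.card ≤ k →
      (1 - ε) * ∑ j ∈ S, (colDeg A j : ℝ) ≤ (nbrs A S).card)
    (K' : Finset (Fin N)) (hK' : K'.card ≤ k) (w : Fin N → ℝ) :
    ((dmin : ℝ) - 4 * dmax * ε) * ∑ j ∈ K', |w j| ≤
      ∑ i, |∑ j ∈ K', A i j * w j| :=
  stmt16_general A hentries dmin dmax hd ε hε0 hexp K' hK' w
end
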